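/- For every ρ, μ ∈ ℝ and σ > 0, the expected improvement under a Gaussian is strictly positive: if Y is distributed according to N(μ, σ²), then E[max(0, ρ − Y)] > 0; equivalently, (ρ − μ)·Φ((ρ − μ)/σ) + σ·φ((ρ − μ)/σ) > 0. -/

import Mathlib

open MeasureTheory ProbabilityTheory

/-- The standard normal probability density function. -/
noncomputable def stdNormalPDF (z : ℝ) : ℝ := Real.exp (-z ^ 2 / 2) / Real.sqrt (2 * Real.pi)

/-- The standard normal cumulative distribution function. -/
noncomputable def stdNormalCDF (z : ℝ) : ℝ := ∫ t in Set.Iic z, stdNormalPDF t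

/-! The improvement `max 0 (ρ - y)` is nonnegative and positive exactly on `(-∞, ρ)`, which a
nondegenerate Gaussian charges, so its expectation is positive. Standardising `y = μ + σ t` and
integrating `t φ(t) = -φ'(t)` over `(-∞, z]` identifies this expectation with
`(ρ - μ) Φ(z) + σ φ(z)`, `z = (ρ - μ) / σ`, which is therefore positive too. -/

open Real Set

lemma stdNormalPDF_eq_gaussianPDFReal : stdNormalPDF = gaussianPDFReal 0 1 := by
  ext z
  simp [stdNormalPDF, gaussianPDFReal, div_eq_inv_mul]

lemma integrable_stdNormalPDF : Integrable stdNormalPDF :=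
  stdNormalPDF_eq_gaussianPDFReal ▸ integrable_gaussianPDFReal 0 1

lemma integrable_mul_stdNormalPDF : Integrable fun t ↦ t * stdNormalPDF t := by
  refine ((integrable_mul_exp_neg_mul_sq (b := 1 / 2) (by norm_num)).div_const
    √(2 * π)).congr (.of_forall fun t ↦ ?_)
  simp only [stdNormalPDF]
  ring_nf

lemma hasDerivAt_stdNormalPDF (z : ℝ) : HasDerivAt stdNormalPDF (-(z * stdNormalPDF z)) z := by
  have h : HasDerivAt (fun x : ℝ ↦ -x ^ 2 / 2) (-z) z :=
    ((hasDerivAt_pow 2 z).neg.div_const 2).congr_deriv (by ring)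
  exact (h.exp.div_const √(2 * π)).congr_deriv (by unfold stdNormalPDF; ring)

lemma setIntegral_Iic_mul_stdNormalPDF (z : ℝ) :
    ∫ t in Iic z, t * stdNormalPDF t = -stdNormalPDF z := by
  have hderiv (x : ℝ) (_ : x ∈ Iic z) := hasDerivAt_stdNormalPDF x
  have hint := integrable_mul_stdNormalPDF.neg.integrableOn (s := Iic z)
  have hlim := tendsto_zero_of_hasDerivAt_of_integrableOn_Iic hderiv hint
    integrable_stdNormalPDF.integrableOn
  rw [← neg_eq_iff_eq_neg, ← integral_neg,
    integral_Iic_of_hasDerivAt_of_tendsto' hderiv hint hlim, sub_zero]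

lemma integral_posPart_sub_gaussianReal_zero_one (z : ℝ) :
    ∫ t, max 0 (z - t) ∂gaussianReal 0 1 = z * stdNormalCDF z + stdNormalPDF z := by
  have hIic : ∀ t ∈ Iic z,
      stdNormalPDF t * max 0 (z - t) = z * stdNormalPDF t - t * stdNormalPDF t :=
    fun t ht ↦ by rw [max_eq_right (sub_nonneg.mpr ht)]; ring
  have hIoi : ∀ t ∉ Iic z, stdNormalPDF t * max 0 (z - t) = 0 :=
    fun t ht ↦ by rw [max_eq_left (sub_nonpos.mpr (not_le.mp ht).le), mul_zero]
  rw [integral_gaussianReal_eq_integral_smul one_ne_zero, ← stdNormalPDF_eq_gaussianPDFReal]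
  simp only [smul_eq_mul]
  rw [← setIntegral_eq_integral_of_forall_compl_eq_zero hIoi,
    setIntegral_congr_fun measurableSet_Iic hIic,
    integral_sub (integrable_stdNormalPDF.const_mul z).integrableOn
      integrable_mul_stdNormalPDF.integrableOn, integral_const_mul,
    setIntegral_Iic_mul_stdNormalPDF, stdNormalCDF, sub_neg_eq_add]

lemma gaussianReal_eq_map_affine (μ σ : ℝ) :
    gaussianReal μ (σ ^ 2).toNNReal = (gaussianReal 0 1).map (fun x ↦ μ + σ * x) := by
  have hcomp : (fun x ↦ μ + σ * x) = (μ + ·) ∘ (σ * ·) := rfl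
  rw [hcomp, ← Measure.map_map (by fun_prop) (by fun_prop), gaussianReal_map_const_mul,
    gaussianReal_map_const_add]
  congr 1
  · ring
  · ext; simp [sq_nonneg]

lemma integral_posPart_sub_gaussianReal (ρ μ : ℝ) {σ : ℝ} (hσ : 0 < σ) :
    ∫ y, max 0 (ρ - y) ∂gaussianReal μ (σ ^ 2).toNNReal
      = (ρ - μ) * stdNormalCDF ((ρ - μ) / σ) + σ * stdNormalPDF ((ρ - μ) / σ) := by
  have hscale (x : ℝ) : max 0 (ρ - (μ + σ * x)) = σ * max 0 ((ρ - μ) / σ - x) := by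
    rw [mul_max_of_nonneg _ _ hσ.le, mul_zero, mul_sub, mul_div_cancel₀ _ hσ.ne', sub_sub]
  rw [gaussianReal_eq_map_affine, integral_map (by fun_prop) (by fun_prop)]
  simp only [hscale]
  rw [integral_const_mul, integral_posPart_sub_gaussianReal_zero_one, mul_add, ← mul_assoc,
    mul_div_cancel₀ _ hσ.ne']

lemma integral_posPart_sub_pos {m : Measure ℝ} {ρ : ℝ}
    (hint : Integrable (fun y ↦ max 0 (ρ - y)) m) (hm : m (Iio ρ) ≠ 0) :
    0 < ∫ y, max 0 (ρ - y) ∂m := by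
  have hsupp : Function.support (fun y ↦ max 0 (ρ - y)) = Iio ρ := by
    ext y
    simp
  rw [integral_pos_iff_support_of_nonneg (f := fun y ↦ max 0 (ρ - y)) (fun _ ↦ le_max_left _ _)
    hint, hsupp]
  exact pos_iff_ne_zero.mpr hm

lemma integrable_posPart_sub_gaussianReal (ρ μ : ℝ) (v : NNReal) :
    Integrable (fun y ↦ max 0 (ρ - y)) (gaussianReal μ v) := by
  have hid := (memLp_id_gaussianReal (μ := μ) (v := v) 1).integrable le_rfl
  have h := ((integrable_const ρ).sub hid).pos_part
  simpa only [Pi.sub_apply, id, max_comm (0 : ℝ)] using h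

/-- For every ρ, μ ∈ ℝ and σ > 0, the expected improvement under a Gaussian is strictly
positive: if `Y ~ N(μ, σ²)` then `E[max 0 (ρ - Y)] > 0`; equivalently,
`(ρ - μ)·Φ((ρ - μ)/σ) + σ·φ((ρ - μ)/σ) > 0`. -/
theorem expected_improvement_pos (ρ μ σ : ℝ) (hσ : 0 < σ) :
    (0 < ∫ y, max 0 (ρ - y) ∂(gaussianReal μ (Real.toNNReal (σ ^ 2)))) ∧
      0 < (ρ - μ) * stdNormalCDF ((ρ - μ) / σ) + σ * stdNormalPDF ((ρ - μ) / σ) := by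
  have hv : (σ ^ 2).toNNReal ≠ 0 := (Real.toNNReal_pos.mpr (by positivity)).ne'
  have hIio : gaussianReal μ (σ ^ 2).toNNReal (Iio ρ) ≠ 0 := fun h ↦ by
    simpa using gaussianReal_absolutelyContinuous' μ hv h
  have hpos := integral_posPart_sub_pos (integrable_posPart_sub_gaussianReal ρ μ _) hIio
  exact ⟨hpos, integral_posPart_sub_gaussianReal ρ μ hσ ▸ hpos⟩
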